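/- arXiv:1308.1971 — 3 statements merged into one kernel-verified Lean document; each statement's English description precedes it below -/
import Mathlib

section
/- Suppose a configuration satisfies: (Tree Initially) every node has incoming count at most K, every node has at most one incoming edge in each E_i, and for each i ∈ ℛ root i has no incoming edge in E_i; (Minimum Degree) Σ_{u∈V} d̄_u ≥ K·N − M; (Root Child) for every i ∈ ℛ, d̄_i ≥ 1 and root i has an i-child, i.e. d_i(i) ≥ 1; and (No Cycle) for every i ∈ ℛ, every node having an incoming edge in E_i belongs to V_i. Then no Add and no Insert is applicable at any triple (u_p, u, i) if and only if every node u ∈ V satisfies |{i ∈ ℛ : u ∈ V_i}| = K. -/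
namespace P2P

/-- A walk of length `n` from `r` to `u` in the edge set `E`. -/
def Walk {α : Type*} (E : Finset (α × α)) (r u : α) (n : ℕ) : Prop :=
  ∃ f : ℕ → α, f 0 = r ∧ f n = u ∧ ∀ k < n, (f k, f (k + 1)) ∈ E

/-- Depth of `u` below root `r`: minimal number of edges of a directed walk
(equivalently, of a directed path) from `r` to `u`; `⊤` if unreachable. -/
noncomputable def depth {α : Type*} (E : Finset (α × α)) (r u : α) : ℕ∞ :=
  sInf {n : ℕ∞ | ∃ m : ℕ, n = (m : ℕ∞) ∧ Walk E r u m}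

/-- Out-degree of `u` in `E`. -/
def outDeg {α : Type*} [DecidableEq α] (E : Finset (α × α)) (u : α) : ℕ :=
  (E.filter fun e => e.1 = u).card

/-- In-degree of `u` in `E`. -/
def inDeg {α : Type*} [DecidableEq α] (E : Finset (α × α)) (u : α) : ℕ :=
  (E.filter fun e => e.2 = u).card

/-- A configuration assigns to each color an edge set. -/
abbrev Cfg := ℕ → Finset (ℕ × ℕ)

/-- The node set `V = {1, …, N}`. -/
def V (N : ℕ) : Finset ℕ := Finset.Icc 1 N

/-- The root set `ℛ = {1, …, M}`. -/
def R (M : ℕ) : Finset ℕ := Finset.Icc 1 M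

/-- `u` has an incoming `i`-edge (root `i` counts its server link). -/
def HasIn (E : Cfg) (i u : ℕ) : Prop := (∃ w, (w, u) ∈ E i) ∨ u = i

/-- Incoming count of `u`: incoming edges of all colors, plus 1 if `u` is a root. -/
def incCount (M : ℕ) (E : Cfg) (u : ℕ) : ℕ :=
  (∑ i ∈ R M, inDeg (E i) u) + (if u ∈ R M then 1 else 0)

/-- Total out-degree `d(u)`. -/
def dtot (M : ℕ) (E : Cfg) (u : ℕ) : ℕ := ∑ i ∈ R M, outDeg (E i) u

/-- Edges are ordered pairs of distinct nodes of `V`. -/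
def ValidEdges (N M : ℕ) (E : Cfg) : Prop :=
  ∀ i ∈ R M, ∀ e ∈ E i, e.1 ∈ V N ∧ e.2 ∈ V N ∧ e.1 ≠ e.2

/-- Assumption (Tree Initially). -/
def TreeInit (N M K : ℕ) (E : Cfg) : Prop :=
  (∀ u ∈ V N, incCount M E u ≤ K) ∧
  (∀ i ∈ R M, ∀ u ∈ V N, inDeg (E i) u ≤ 1) ∧
  (∀ i ∈ R M, inDeg (E i) i = 0)

/-- A node is available if it has spare capacity and some incoming edge. -/
def Available (M : ℕ) (E : Cfg) (dbar : ℕ → ℕ) (v : ℕ) : Prop :=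
  dtot M E v < dbar v ∧ ∃ i ∈ R M, HasIn E i v

/-- An Add is applicable at `(u_p, u, i)`. -/
def AddApp (N M K : ℕ) (E : Cfg) (dbar : ℕ → ℕ) (up u i : ℕ) : Prop :=
  i ∈ R M ∧ up ∈ V N ∧ u ∈ V N ∧
  incCount M E u < K ∧ ¬ HasIn E i u ∧ HasIn E i up ∧ dtot M E up < dbar up

/-- An Insert is applicable at `(u_p, u, i)` with `i`-child `u_c` of `u_p`. -/
def InsertApp (N M K : ℕ) (E : Cfg) (up u uc i : ℕ) : Prop :=
  i ∈ R M ∧ up ∈ V N ∧ u ∈ V N ∧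
  incCount M E u < K ∧ ¬ HasIn E i u ∧ HasIn E i up ∧ (up, uc) ∈ E i

/-- A Jump is applicable at `(u, v, i)`. -/
def JumpApp (M : ℕ) (E : Cfg) (dbar : ℕ → ℕ) (u v i : ℕ) : Prop :=
  i ∈ R M ∧ (∃ up, (up, u) ∈ E i) ∧ Available M E dbar v ∧ HasIn E i v ∧
  depth (E i) i v + 1 < depth (E i) i u

/-- A LeafSwap is applicable at `(u, v, i)`. -/
def LeafSwapApp (M : ℕ) (E : Cfg) (u v i : ℕ) : Prop :=
  i ∈ R M ∧ (∃ up, (up, u) ∈ E i) ∧ (∃ vp, (vp, v) ∈ E i) ∧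
  outDeg (E i) v = 0 ∧ 0 < outDeg (E i) u ∧
  depth (E i) i v < depth (E i) i u

/-- A MixSwap is applicable at `(u, u_c, v, v_c, i, j)`. -/
def MixSwapApp (M : ℕ) (E : Cfg) (u uc v vc i j : ℕ) : Prop :=
  i ∈ R M ∧ j ∈ R M ∧ i ≠ j ∧ u ≠ v ∧
  (u, uc) ∈ E i ∧ (v, vc) ∈ E j ∧ uc ≠ v ∧ vc ≠ u ∧
  depth (E i) i v ≤ depth (E i) i u ∧ depth (E j) j u ≤ depth (E j) j v ∧
  ((depth (E i) i u, depth (E j) j u) ≠ (depth (E i) i v, depth (E j) j v) ∨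
    ((u : ℤ) - (v : ℤ)) * ((j : ℤ) - (i : ℤ)) > 0)

/-- Result of performing an Add. -/
def doAdd (E : Cfg) (up u i : ℕ) : Cfg :=
  fun l => if l = i then insert (up, u) (E l) else E l

/-- Result of performing an Insert. -/
def doInsert (E : Cfg) (up u uc i : ℕ) : Cfg :=
  fun l => if l = i then insert (up, u) (insert (u, uc) ((E l).erase (up, uc))) else E l

/-- Result of performing a Jump (parent `u_p` is replaced by `v`). -/
def doJump (E : Cfg) (up u v i : ℕ) : Cfg :=
  fun l => if l = i then insert (v, u) ((E l).erase (up, u)) else E l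

/-- Result of performing a LeafSwap (`u` and `v` exchange parents). -/
def doLeafSwap (E : Cfg) (up u vp v i : ℕ) : Cfg :=
  fun l => if l = i then
    insert (up, v) (insert (vp, u) (((E l).erase (up, u)).erase (vp, v))) else E l

/-- Result of performing a MixSwap (`u` and `v` exchange the children `u_c`, `v_c`). -/
def doMixSwap (E : Cfg) (u uc v vc i j : ℕ) : Cfg :=
  fun l => if l = i then insert (v, uc) ((E l).erase (u, uc))
    else if l = j then insert (u, vc) ((E l).erase (v, vc)) else E l

/-- One step of the algorithm: perform any applicable Add, Insert, Jump,
LeafSwap or MixSwap. -/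
def Step (N M K : ℕ) (dbar : ℕ → ℕ) (E E' : Cfg) : Prop :=
  (∃ up u i, AddApp N M K E dbar up u i ∧ E' = doAdd E up u i) ∨
  (∃ up u uc i, InsertApp N M K E up u uc i ∧ E' = doInsert E up u uc i) ∨
  (∃ up u v i, (up, u) ∈ E i ∧ JumpApp M E dbar u v i ∧ E' = doJump E up u v i) ∨
  (∃ up u vp v i, (up, u) ∈ E i ∧ (vp, v) ∈ E i ∧ LeafSwapApp M E u v i ∧
      E' = doLeafSwap E up u vp v i) ∨
  (∃ u uc v vc i j, MixSwapApp M E u uc v vc i j ∧ E' = doMixSwap E u uc v vc i j)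

/-- Total number of edges `|E|`. -/
def numE (M : ℕ) (E : Cfg) : ℕ := ∑ i ∈ R M, (E i).card

/-- `Y = Σ_u Σ_i min(L_i(u), N)`. -/
noncomputable def Yval (N M : ℕ) (E : Cfg) : ℕ :=
  ∑ u ∈ V N, ∑ i ∈ R M, (min (depth (E i) i u) (N : ℕ∞)).toNat

/-- `S = Σ_u u · Σ_i i · d_i(u)`. -/
def Sval (N M : ℕ) (E : Cfg) : ℕ :=
  ∑ u ∈ V N, u * ∑ i ∈ R M, i * outDeg (E i) u

/-!
The incoming count of a node is exactly the number of trees covering it: each colour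
contributes at most one incoming edge, a root's server link stands in for the missing
in-edge of its own colour, and (No Cycle) makes "has an incoming `i`-edge" equivalent to
"lies in `V_i`". If some node is covered by fewer than `K` trees, pick a colour `i` missing
it; root `i` has an `i`-child, so an Insert at `(i, u, i)` applies. Conversely, coverage
`K` means incoming count `K`, which rules out both operations.
-/

open Finset

section EdgeSets

variable {α : Type*}

theorem walk_zero_self (E : Finset (α × α)) (r : α) : Walk E r r 0 :=
  ⟨fun _ => r, rfl, rfl, fun _ hk => absurd hk (Nat.not_lt_zero _)⟩

theorem Walk.eq_or_exists_mem {E : Finset (α × α)} {r u : α} {m : ℕ} (h : Walk E r u m) :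
    u = r ∨ ∃ w, (w, u) ∈ E := by
  obtain ⟨f, hf0, hfm, hstep⟩ := h
  cases m with
  | zero => exact Or.inl (hfm ▸ hf0)
  | succ k => exact Or.inr ⟨f k, hfm ▸ hstep k k.lt_succ_self⟩

theorem depth_ne_top_iff {E : Finset (α × α)} {r u : α} :
    depth E r u ≠ ⊤ ↔ ∃ m, Walk E r u m := by
  rw [depth, Ne, sInf_eq_top]
  push Not
  constructor
  · rintro ⟨_, ⟨m, -, hm⟩, -⟩
    exact ⟨m, hm⟩
  · rintro ⟨m, hm⟩
    exact ⟨m, ⟨m, rfl, hm⟩, ENat.natCast_ne_top m⟩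

variable [DecidableEq α]

theorem exists_mem_snd_iff_inDeg_pos {E : Finset (α × α)} {u : α} :
    (∃ w, (w, u) ∈ E) ↔ 0 < inDeg E u := by
  simp only [inDeg, card_pos, filter_nonempty_iff, Prod.exists]
  exact ⟨fun ⟨w, hw⟩ => ⟨w, u, hw, rfl⟩, fun ⟨w, _, hw, h⟩ => ⟨w, h ▸ hw⟩⟩

theorem exists_mem_fst_of_outDeg_pos {E : Finset (α × α)} {u : α} (h : 0 < outDeg E u) :
    ∃ v, (u, v) ∈ E := by
  obtain ⟨⟨a, v⟩, hav, rfl⟩ := filter_nonempty_iff.mp (card_pos.mp h)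
  exact ⟨v, hav⟩

end EdgeSets

theorem depth_ne_top_iff_hasIn {E : Cfg} {i u : ℕ}
    (hnocycle : (∃ w, (w, u) ∈ E i) → depth (E i) i u ≠ ⊤) :
    depth (E i) i u ≠ ⊤ ↔ HasIn E i u := by
  refine ⟨fun h => ?_, ?_⟩
  · obtain ⟨m, hm⟩ := depth_ne_top_iff.mp h
    exact hm.eq_or_exists_mem.symm
  · rintro (hin | rfl)
    · exact hnocycle hin
    · exact depth_ne_top_iff.mpr ⟨0, walk_zero_self _ _⟩

open Classical in
theorem ite_hasIn_eq_inDeg_add {E : Cfg} {i u : ℕ}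
    (hle : inDeg (E i) u ≤ 1) (hroot : inDeg (E i) i = 0) :
    (if HasIn E i u then 1 else 0) = inDeg (E i) u + if u = i then 1 else 0 := by
  by_cases hui : u = i
  · subst hui
    simp [HasIn, hroot]
  · have hin : HasIn E i u ↔ 0 < inDeg (E i) u := by
      simp only [HasIn, hui, or_false, exists_mem_snd_iff_inDeg_pos]
    rw [if_neg hui, add_zero]
    by_cases h : HasIn E i u
    · rw [if_pos h]
      have := hin.mp h
      omega
    · rw [if_neg h]
      have := mt hin.mpr h
      omega

open Classical in
theorem card_hasIn_eq_incCount {M : ℕ} {E : Cfg} {u : ℕ}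
    (hle : ∀ i ∈ R M, inDeg (E i) u ≤ 1) (hroot : ∀ i ∈ R M, inDeg (E i) i = 0) :
    #{i ∈ R M | HasIn E i u} = incCount M E u := by
  calc #{i ∈ R M | HasIn E i u}
      = ∑ i ∈ R M, (inDeg (E i) u + if u = i then 1 else 0) := by
        rw [card_filter]
        exact sum_congr rfl fun i hi => ite_hasIn_eq_inDeg_add (hle i hi) (hroot i hi)
    _ = incCount M E u := by rw [sum_add_distrib, sum_ite_eq, incCount]

open Classical in
theorem ncard_depth_ne_top_eq_card_hasIn {M : ℕ} {E : Cfg} {u : ℕ}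
    (hnocycle : ∀ i ∈ R M, (∃ w, (w, u) ∈ E i) → depth (E i) i u ≠ ⊤) :
    {i : ℕ | i ∈ R M ∧ depth (E i) i u ≠ ⊤}.ncard = #{i ∈ R M | HasIn E i u} := by
  rw [← Set.ncard_coe_finset, coe_filter]
  congr 1
  ext i
  exact and_congr_right fun hi => depth_ne_top_iff_hasIn (hnocycle i hi)

open Classical in
theorem exists_not_hasIn_of_card_lt {M : ℕ} {E : Cfg} {u : ℕ}
    (hlt : #{i ∈ R M | HasIn E i u} < M) : ∃ i ∈ R M, ¬ HasIn E i u := by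
  obtain ⟨i, hi, hni⟩ := exists_mem_notMem_of_card_lt_card (t := R M) (by simpa [R] using hlt)
  exact ⟨i, hi, fun h => hni (mem_filter.mpr ⟨hi, h⟩)⟩

theorem greedy_static_characterization_general
    (N M K : ℕ) (hKM : K ≤ M) (hMN : M ≤ N)
    (E : Cfg) (dbar : ℕ → ℕ)
    (htree : TreeInit N M K E)
    (hroot : ∀ i ∈ R M, 1 ≤ dbar i ∧ 1 ≤ outDeg (E i) i)
    (hnocycle : ∀ i ∈ R M, ∀ u : ℕ, (∃ w, (w, u) ∈ E i) → depth (E i) i u ≠ ⊤) :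
    ((∀ up u i : ℕ, ¬ AddApp N M K E dbar up u i) ∧
      (∀ up u uc i : ℕ, ¬ InsertApp N M K E up u uc i)) ↔
    (∀ u ∈ V N, {i : ℕ | i ∈ R M ∧ depth (E i) i u ≠ ⊤}.ncard = K) := by
  classical
  have hcard (u : ℕ) (hu : u ∈ V N) : #{i ∈ R M | HasIn E i u} = incCount M E u :=
    card_hasIn_eq_incCount (fun i hi => htree.2.1 i hi u hu) htree.2.2
  have hcount (u : ℕ) (hu : u ∈ V N) :
      {i : ℕ | i ∈ R M ∧ depth (E i) i u ≠ ⊤}.ncard = incCount M E u :=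
    (ncard_depth_ne_top_eq_card_hasIn fun i hi => hnocycle i hi u).trans (hcard u hu)
  constructor
  · rintro ⟨-, hIns⟩ u hu
    rw [hcount u hu]
    refine le_antisymm (htree.1 u hu) (not_lt.mp fun hlt => ?_)
    obtain ⟨i, hi, hni⟩ := exists_not_hasIn_of_card_lt
      ((hcard u hu).trans_lt (hlt.trans_le hKM))
    obtain ⟨uc, huc⟩ := exists_mem_fst_of_outDeg_pos (hroot i hi).2
    have hiV : i ∈ V N := by
      simp only [R, V, mem_Icc] at hi ⊢
      omega
    exact hIns i u uc i ⟨hi, hiV, hu, hlt, hni, Or.inr rfl, huc⟩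
  · intro hK
    constructor
    · rintro up u i ⟨-, -, hu, hlt, -⟩
      exact hlt.ne (hcount u hu ▸ hK u hu)
    · rintro up u uc i ⟨-, -, hu, hlt, -⟩
      exact hlt.ne (hcount u hu ▸ hK u hu)

/-- under Tree Initially, Minimum Degree, Root Child and No Cycle,
no Add and no Insert is applicable anywhere iff every node is covered by
exactly `K` trees. -/
theorem greedy_static_characterization
    (N M K : ℕ) (hK : 0 < K) (hKM : K ≤ M) (hMN : M ≤ N)
    (E : Cfg) (dbar : ℕ → ℕ)
    (hvalid : ValidEdges N M E) (htree : TreeInit N M K E)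
    (hmin : K * N - M ≤ ∑ u ∈ V N, dbar u)
    (hroot : ∀ i ∈ R M, 1 ≤ dbar i ∧ 1 ≤ outDeg (E i) i)
    (hnocycle : ∀ i ∈ R M, ∀ u : ℕ, (∃ w, (w, u) ∈ E i) → depth (E i) i u ≠ ⊤) :
    ((∀ up u i : ℕ, ¬ AddApp N M K E dbar up u i) ∧
      (∀ up u uc i : ℕ, ¬ InsertApp N M K E up u uc i)) ↔
    (∀ u ∈ V N, {i : ℕ | i ∈ R M ∧ depth (E i) i u ≠ ⊤}.ncard = K) :=
  greedy_static_characterization_general N M K hKM hMN E dbar htree hroot hnocycle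

end P2P
end

section
/- Let C_0, C_1, …, C_T be a sequence of configurations such that C_0 satisfies Tree Initially and each C_{t+1} is obtained from C_t by performing an applicable Add (adding (u_p,u) to E_i) or an applicable Insert (removing (u_p,u_c) from E_i and adding (u_p,u) and (u,u_c) to E_i). Then every C_t satisfies Tree Initially and T ≤ K·N − M. Moreover, if C_0 additionally satisfies Minimum Degree (Σ_{u∈V} d̄_u ≥ K·N − M), Root Child (for every i ∈ ℛ, d̄_i ≥ 1 and d_i(i) ≥ 1), and No Cycle (for every i ∈ ℛ, every node having an incoming edge in E_i belongs to V_i), and no Add or Insert is applicable in C_T, then in C_T every node u ∈ V satisfies |{i ∈ ℛ : u ∈ V_i}| = K. -/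
namespace P2P

/-- A greedy step: perform an applicable Add or Insert. -/
def GreedyStep (N M K : ℕ) (dbar : ℕ → ℕ) (E E' : Cfg) : Prop :=
  (∃ up u i, AddApp N M K E dbar up u i ∧ E' = doAdd E up u i) ∨
  (∃ up u uc i, InsertApp N M K E up u uc i ∧ E' = doInsert E up u uc i)

/-!
Each Add or Insert gives a node `u` with incoming count below `K` one new incoming `i`-edge
and leaves all other in-degrees unchanged (an Insert replaces the edge `(u_p, u_c)` by the path
`u_p → u → u_c`). Hence Tree Initially is preserved, and the total incoming count
`∑ u, incCount u`, which is at least `M` (the server links of the roots) and at most `K * N`,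
grows by one per step. Adds and Inserts also keep a child below every root and keep every node
with an incoming `i`-edge reachable from root `i`. In a terminal configuration a node with
incoming count below `K ≤ M` misses some color `i`, and inserting it below root `i` would be
applicable; so every node has exactly `K` incoming edges, in `K` distinct colors, and by
reachability lies in exactly `K` trees.
-/

open Finset Relation

section EdgeSets

variable {α : Type*} {s : Finset (α × α)} {r p u c v : α}

def Reach (s : Finset (α × α)) : α → α → Prop := ReflTransGen fun a b => (a, b) ∈ s

theorem exists_walk_iff_reach : (∃ n, Walk s r v n) ↔ Reach s r v := by
  constructor
  · rintro ⟨n, f, hf0, hfn, hf⟩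
    subst hf0 hfn
    induction n with
    | zero => exact .refl
    | succ n ih => exact .tail (ih fun k hk => hf k (by omega)) (hf n (by omega))
  · intro h
    induction h with
    | refl => exact ⟨0, fun _ => r, rfl, rfl, by simp⟩
    | @tail w x _ hwx ih =>
      obtain ⟨n, f, hf0, hfn, hf⟩ := ih
      refine ⟨n + 1, fun k => if k = n + 1 then x else f k, by simpa using hf0, by simp, ?_⟩
      intro k hk
      rcases Nat.lt_or_eq_of_le (Nat.le_of_lt_succ hk) with hk | rfl
      · have hk₁ : k ≠ n + 1 := by omega
        simpa [hk₁, hk.ne] using hf k hk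
      · simpa [hfn] using hwx

theorem depth_ne_top_iff_reach : depth s r v ≠ ⊤ ↔ Reach s r v := by
  simp [depth, sInf_eq_top, ← exists_walk_iff_reach]

def Rooted (s : Finset (α × α)) (r : α) : Prop := ∀ ⦃a b⦄, (a, b) ∈ s → Reach s r b

variable [DecidableEq α]

theorem rooted_insert (hs : Rooted s r) (hp : Reach s r p) : Rooted (insert (p, u) s) r := by
  have hmono : ∀ {x}, Reach s r x → Reach (insert (p, u) s) r x :=
    fun h => ReflTransGen.mono (fun _ _ hab => mem_insert_of_mem hab) _ _ h
  intro a b hab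
  rcases mem_insert.1 hab with hab | hab
  · cases hab
    exact .tail (hmono hp) (mem_insert_self _ _)
  · exact hmono (hs hab)

def subdivide (s : Finset (α × α)) (p u c : α) : Finset (α × α) :=
  insert (p, u) (insert (u, c) (s.erase (p, c)))

theorem reach_subdivide (h : Reach s r v) : Reach (subdivide s p u c) r v := by
  refine ReflTransGen.lift' id (fun a b hab => ?_) _ _ h
  by_cases he : (a, b) = (p, c)
  · cases he
    exact .tail (.single (mem_insert_self _ _)) (mem_insert_of_mem (mem_insert_self _ _))
  · exact .single (mem_insert_of_mem (mem_insert_of_mem (mem_erase.2 ⟨he, hab⟩)))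

theorem rooted_subdivide (hs : Rooted s r) (hp : Reach s r p) :
    Rooted (subdivide s p u c) r := by
  have hu : Reach (subdivide s p u c) r u := .tail (reach_subdivide hp) (mem_insert_self _ _)
  intro a b hab
  rcases mem_insert.1 hab with hab | hab
  · cases hab; exact hu
  rcases mem_insert.1 hab with hab | hab
  · cases hab; exact .tail hu (mem_insert_of_mem (mem_insert_self _ _))
  · exact reach_subdivide (hs (mem_of_mem_erase hab))

theorem exists_mem_subdivide {a b : α} (h : (a, b) ∈ s) : ∃ b', (a, b') ∈ subdivide s p u c := by
  by_cases he : (a, b) = (p, c)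
  · cases he; exact ⟨u, mem_insert_self _ _⟩
  · exact ⟨b, mem_insert_of_mem (mem_insert_of_mem (mem_erase.2 ⟨he, h⟩))⟩

theorem inDeg_pos_iff : 0 < inDeg s v ↔ ∃ w, (w, v) ∈ s := by
  simp [inDeg, Finset.card_pos, Finset.Nonempty]

theorem outDeg_pos_iff : 0 < outDeg s v ↔ ∃ w, (v, w) ∈ s := by
  simp [outDeg, Finset.card_pos, Finset.Nonempty]

theorem eq_of_inDeg_le_one {w w' : α} (h : inDeg s v ≤ 1) (hw : (w, v) ∈ s) (hw' : (w', v) ∈ s) :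
    w = w' := by
  have := Finset.card_le_one.1 h (w, v) (mem_filter.2 ⟨hw, rfl⟩) (w', v) (mem_filter.2 ⟨hw', rfl⟩)
  exact congrArg Prod.fst this

def GainsInEdge (s t : Finset (α × α)) (u : α) : Prop :=
  ∀ v, inDeg t v = inDeg s v + if v = u then 1 else 0

theorem gainsInEdge_insert (h : (p, u) ∉ s) : GainsInEdge s (insert (p, u) s) u := by
  intro v
  unfold inDeg
  by_cases hv : v = u
  · subst hv
    rw [filter_insert, if_pos rfl, if_pos rfl, card_insert_of_notMem fun hm => h (mem_filter.1 hm).1]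
  · rw [filter_insert, if_neg (Ne.symm hv), if_neg hv, add_zero]

theorem inDeg_erase_add (h : (p, c) ∈ s) :
    inDeg (s.erase (p, c)) v + (if v = c then 1 else 0) = inDeg s v := by
  unfold inDeg
  rw [filter_erase]
  split_ifs with hv
  · exact card_erase_add_one (mem_filter.2 ⟨h, hv.symm⟩)
  · rw [erase_eq_of_notMem fun hm => hv (mem_filter.1 hm).2.symm, add_zero]

theorem gainsInEdge_subdivide (hpc : (p, c) ∈ s) (hpu : (p, u) ∉ s) (huc : (u, c) ∉ s)
    (hne : p ≠ u) : GainsInEdge s (subdivide s p u c) u := by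
  intro v
  have huc' : (u, c) ∉ s.erase (p, c) := fun h => huc (mem_of_mem_erase h)
  have hpu' : (p, u) ∉ insert (u, c) (s.erase (p, c)) := by
    simp [hne, hpu]
  rw [subdivide, gainsInEdge_insert hpu', gainsInEdge_insert huc', inDeg_erase_add hpc]

end EdgeSets

section Configurations

variable {N M K : ℕ} {E : Cfg} {s : Finset (ℕ × ℕ)} {i u : ℕ}

theorem doAdd_eq_update (E : Cfg) (up u i : ℕ) :
    doAdd E up u i = Function.update E i (insert (up, u) (E i)) := by
  funext l
  by_cases hl : l = i
  · subst hl; simp [doAdd]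
  · simp [doAdd, hl]

theorem doInsert_eq_update (E : Cfg) (up u uc i : ℕ) :
    doInsert E up u uc i = Function.update E i (subdivide (E i) up u uc) := by
  funext l
  by_cases hl : l = i
  · subst hl; simp [doInsert, subdivide]
  · simp [doInsert, hl]

theorem card_R (M : ℕ) : (R M).card = M := by simp [R]

theorem R_subset_V (hMN : M ≤ N) : R M ⊆ V N := Icc_subset_Icc_right hMN

theorem hasIn_iff_reach (hR : Rooted (E i) i) : HasIn E i u ↔ Reach (E i) i u := by
  constructor
  · rintro (⟨w, hw⟩ | rfl)
    · exact hR hw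
    · exact .refl
  · intro h
    rcases h.cases_tail with rfl | ⟨w, -, hw⟩
    · exact Or.inr rfl
    · exact Or.inl ⟨w, hw⟩

theorem inDeg_eq_zero_of_not_hasIn (h : ¬ HasIn E i u) : inDeg (E i) u = 0 :=
  Nat.eq_zero_of_not_pos fun hpos => h (Or.inl (inDeg_pos_iff.1 hpos))

theorem incCount_update (hi : i ∈ R M) (hs : GainsInEdge (E i) s u) (v : ℕ) :
    incCount M (Function.update E i s) v = incCount M E v + if v = u then 1 else 0 := by
  unfold incCount
  rw [← add_sum_erase _ _ hi, ← add_sum_erase _ (fun l => inDeg (E l) v) hi,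
    Function.update_self, hs,
    sum_congr rfl fun l hl => by rw [Function.update_of_ne (ne_of_mem_erase hl)]]
  ring

theorem sum_incCount_update (hi : i ∈ R M) (hs : GainsInEdge (E i) s u) (hu : u ∈ V N) :
    ∑ v ∈ V N, incCount M (Function.update E i s) v = ∑ v ∈ V N, incCount M E v + 1 := by
  simp only [incCount_update hi hs]
  rw [sum_add_distrib, sum_ite_eq', if_pos hu]

theorem TreeInit.update (ht : TreeInit N M K E) (hi : i ∈ R M) (hlt : incCount M E u < K)
    (hnot : ¬ HasIn E i u) (hs : GainsInEdge (E i) s u) :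
    TreeInit N M K (Function.update E i s) := by
  have hu0 := inDeg_eq_zero_of_not_hasIn hnot
  have hui : u ≠ i := fun h => hnot (Or.inr h)
  refine ⟨fun v hv => ?_, fun l hl v hv => ?_, fun l hl => ?_⟩
  · rw [incCount_update hi hs]
    split_ifs with h
    · subst h; omega
    · exact ht.1 v hv
  · rcases eq_or_ne l i with rfl | hli
    · rw [Function.update_self, hs]
      split_ifs with h
      · subst h; omega
      · simpa using ht.2.1 l hl v hv
    · rw [Function.update_of_ne hli]; exact ht.2.1 l hl v hv
  · rcases eq_or_ne l i with rfl | hli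
    · rw [Function.update_self, hs, ht.2.2 l hl, if_neg hui.symm]
    · rw [Function.update_of_ne hli]; exact ht.2.2 l hl

theorem ValidEdges.update (hv : ValidEdges N M E) (hi : i ∈ R M)
    (hs : ∀ e ∈ s, e ∈ E i ∨ e.1 ∈ V N ∧ e.2 ∈ V N ∧ e.1 ≠ e.2) :
    ValidEdges N M (Function.update E i s) := by
  intro l hl e he
  rcases eq_or_ne l i with rfl | hli
  · rw [Function.update_self] at he
    exact (hs e he).elim (hv l hl e) id
  · rw [Function.update_of_ne hli] at he
    exact hv l hl e he

theorem rooted_update (hR : ∀ l ∈ R M, Rooted (E l) l) (hs : Rooted s i) :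
    ∀ l ∈ R M, Rooted (Function.update E i s l) l := by
  intro l hl
  rcases eq_or_ne l i with rfl | hli
  · rwa [Function.update_self]
  · rw [Function.update_of_ne hli]; exact hR l hl

theorem TreeInit.sum_incCount_le (ht : TreeInit N M K E) :
    ∑ v ∈ V N, incCount M E v ≤ K * N :=
  calc ∑ v ∈ V N, incCount M E v ≤ ∑ _v ∈ V N, K := sum_le_sum ht.1
    _ = K * N := by simp [V, mul_comm]

theorem le_sum_incCount (hMN : M ≤ N) (E : Cfg) : M ≤ ∑ v ∈ V N, incCount M E v :=
  calc M = ∑ v ∈ V N, if v ∈ R M then 1 else 0 := by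
        rw [sum_ite_mem, inter_eq_right.2 (R_subset_V hMN), sum_const, card_R, smul_eq_mul,
          mul_one]
    _ ≤ ∑ v ∈ V N, incCount M E v := sum_le_sum fun v _ => le_add_self

theorem TreeInit.ncard_hasIn (ht : TreeInit N M K E) (hu : u ∈ V N) :
    {i | i ∈ R M ∧ HasIn E i u}.ncard = incCount M E u := by
  classical
  have hcontrib : ∀ i ∈ R M,
      (if HasIn E i u then 1 else 0) = inDeg (E i) u + if u = i then 1 else 0 := by
    intro i hi
    have hle := ht.2.1 i hi u hu
    by_cases h : HasIn E i u
    · rcases eq_or_ne u i with rfl | hui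
      · simp [h, ht.2.2 u hi]
      · have hpos : 0 < inDeg (E i) u :=
          inDeg_pos_iff.2 (h.resolve_right hui)
        simp only [if_pos h, if_neg hui]
        omega
    · have hui : u ≠ i := fun e => h (Or.inr e)
      simp [h, hui, inDeg_eq_zero_of_not_hasIn h]
  have hset : {i | i ∈ R M ∧ HasIn E i u} = ↑((R M).filter (HasIn E · u)) := by
    ext; simp
  rw [hset, Set.ncard_coe_finset, card_filter, sum_congr rfl hcontrib, sum_add_distrib, sum_ite_eq]
  rfl

theorem TreeInit.ncard_depth_ne_top (ht : TreeInit N M K E) (hR : ∀ i ∈ R M, Rooted (E i) i)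
    (hu : u ∈ V N) : {i | i ∈ R M ∧ depth (E i) i u ≠ ⊤}.ncard = incCount M E u := by
  have hset : {i | i ∈ R M ∧ depth (E i) i u ≠ ⊤} = {i | i ∈ R M ∧ HasIn E i u} := by
    ext i
    simp only [Set.mem_ofPred_eq, depth_ne_top_iff_reach]
    exact and_congr_right fun hi => (hasIn_iff_reach (hR i hi)).symm
  rw [hset, ht.ncard_hasIn hu]

theorem TreeInit.incCount_eq_of_not_insertApp (ht : TreeInit N M K E) (hKM : K ≤ M)
    (hMN : M ≤ N) (hchild : ∀ i ∈ R M, ∃ c, (i, c) ∈ E i)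
    (hterm : ∀ up u uc i, ¬ InsertApp N M K E up u uc i) (hu : u ∈ V N) :
    incCount M E u = K := by
  refine le_antisymm (ht.1 u hu) (not_lt.1 fun hlt => ?_)
  obtain ⟨i, hi, hnot⟩ : ∃ i ∈ R M, ¬ HasIn E i u := by
    by_contra! hall
    have hset : {i | i ∈ R M ∧ HasIn E i u} = ↑(R M) := by
      ext i; simpa using hall i
    have := ht.ncard_hasIn hu
    rw [hset, Set.ncard_coe_finset, card_R] at this
    omega
  obtain ⟨c, hc⟩ := hchild i hi
  exact hterm i u c i ⟨hi, R_subset_V hMN hi, hu, hlt, hnot, Or.inr rfl, hc⟩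

end Configurations

namespace GreedyStep

variable {N M K : ℕ} {dbar : ℕ → ℕ} {E E' : Cfg}

theorem validEdges (hv : ValidEdges N M E) (hs : GreedyStep N M K dbar E E') :
    ValidEdges N M E' := by
  rcases hs with ⟨up, u, i, ⟨hi, hup, hu, -, hnot, hhas, -⟩, rfl⟩ |
    ⟨up, u, uc, i, ⟨hi, hup, hu, -, hnot, hhas, hedge⟩, rfl⟩
  · have hne : up ≠ u := fun h => hnot (h ▸ hhas)
    rw [doAdd_eq_update]
    refine hv.update hi fun e he => ?_
    rcases mem_insert.1 he with rfl | he
    · exact Or.inr ⟨hup, hu, hne⟩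
    · exact Or.inl he
  · have hne : up ≠ u := fun h => hnot (h ▸ hhas)
    have huc : u ≠ uc := fun h => hnot (Or.inl ⟨up, h ▸ hedge⟩)
    rw [doInsert_eq_update]
    refine hv.update hi fun e he => ?_
    simp only [subdivide, mem_insert] at he
    rcases he with rfl | rfl | he
    · exact Or.inr ⟨hup, hu, hne⟩
    · exact Or.inr ⟨hu, (hv i hi _ hedge).2.1, huc⟩
    · exact Or.inl (mem_of_mem_erase he)

theorem exists_gainsInEdge (hv : ValidEdges N M E) (ht : TreeInit N M K E)
    (hs : GreedyStep N M K dbar E E') :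
    ∃ i ∈ R M, ∃ u ∈ V N, incCount M E u < K ∧ ¬ HasIn E i u ∧
      ∃ s, GainsInEdge (E i) s u ∧ E' = Function.update E i s := by
  rcases hs with ⟨up, u, i, ⟨hi, -, hu, hlt, hnot, -, -⟩, rfl⟩ |
    ⟨up, u, uc, i, ⟨hi, -, hu, hlt, hnot, hhas, hedge⟩, rfl⟩
  · exact ⟨i, hi, u, hu, hlt, hnot, _, gainsInEdge_insert fun h => hnot (Or.inl ⟨up, h⟩),
      doAdd_eq_update ..⟩
  · have hne : up ≠ u := fun h => hnot (h ▸ hhas)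
    have huc : (u, uc) ∉ E i := fun h =>
      hne (eq_of_inDeg_le_one (ht.2.1 i hi uc (hv i hi _ hedge).2.1) hedge h)
    exact ⟨i, hi, u, hu, hlt, hnot, _,
      gainsInEdge_subdivide hedge (fun h => hnot (Or.inl ⟨up, h⟩)) huc hne,
      doInsert_eq_update ..⟩

theorem treeInit (hv : ValidEdges N M E) (ht : TreeInit N M K E)
    (hs : GreedyStep N M K dbar E E') : TreeInit N M K E' := by
  obtain ⟨i, hi, u, -, hlt, hnot, s, hgain, rfl⟩ := hs.exists_gainsInEdge hv ht
  exact ht.update hi hlt hnot hgain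

theorem sum_incCount (hv : ValidEdges N M E) (ht : TreeInit N M K E)
    (hs : GreedyStep N M K dbar E E') :
    ∑ v ∈ V N, incCount M E' v = ∑ v ∈ V N, incCount M E v + 1 := by
  obtain ⟨i, hi, u, hu, -, -, s, hgain, rfl⟩ := hs.exists_gainsInEdge hv ht
  exact sum_incCount_update hi hgain hu

theorem rooted (hR : ∀ l ∈ R M, Rooted (E l) l) (hs : GreedyStep N M K dbar E E') :
    ∀ l ∈ R M, Rooted (E' l) l := by
  rcases hs with ⟨up, u, i, ⟨hi, -, -, -, -, hhas, -⟩, rfl⟩ |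
    ⟨up, u, uc, i, ⟨hi, -, -, -, -, hhas, -⟩, rfl⟩
  · rw [doAdd_eq_update]
    exact rooted_update hR (rooted_insert (hR i hi) ((hasIn_iff_reach (hR i hi)).1 hhas))
  · rw [doInsert_eq_update]
    exact rooted_update hR (rooted_subdivide (hR i hi) ((hasIn_iff_reach (hR i hi)).1 hhas))

theorem exists_child (hs : GreedyStep N M K dbar E E') {l a b : ℕ} (h : (a, b) ∈ E l) :
    ∃ b', (a, b') ∈ E' l := by
  rcases hs with ⟨up, u, i, -, rfl⟩ | ⟨up, u, uc, i, -, rfl⟩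
  · rw [doAdd_eq_update]
    rcases eq_or_ne l i with rfl | hli
    · exact ⟨b, by simp [h]⟩
    · exact ⟨b, by rwa [Function.update_of_ne hli]⟩
  · rw [doInsert_eq_update]
    rcases eq_or_ne l i with rfl | hli
    · simpa using exists_mem_subdivide h
    · exact ⟨b, by rwa [Function.update_of_ne hli]⟩

end GreedyStep

section Runs

variable {N M K : ℕ} {dbar : ℕ → ℕ} {C : ℕ → Cfg} {T : ℕ}

theorem run_treeInit_and_le_sum_incCount (hMN : M ≤ N) (hvalid : ValidEdges N M (C 0))
    (htree : TreeInit N M K (C 0)) (hstep : ∀ t < T, GreedyStep N M K dbar (C t) (C (t + 1))) :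
    ∀ t ≤ T, ValidEdges N M (C t) ∧ TreeInit N M K (C t) ∧
      M + t ≤ ∑ v ∈ V N, incCount M (C t) v := by
  intro t ht
  induction t with
  | zero => exact ⟨hvalid, htree, le_sum_incCount hMN _⟩
  | succ t ih =>
    obtain ⟨hv, hti, hsum⟩ := ih (by omega)
    have hs := hstep t (by omega)
    exact ⟨hs.validEdges hv, hs.treeInit hv hti, by rw [hs.sum_incCount hv hti]; omega⟩

theorem run_child_and_rooted (hstep : ∀ t < T, GreedyStep N M K dbar (C t) (C (t + 1)))
    (h0 : ∀ i ∈ R M, (∃ c, (i, c) ∈ C 0 i) ∧ Rooted (C 0 i) i) :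
    ∀ t ≤ T, ∀ i ∈ R M, (∃ c, (i, c) ∈ C t i) ∧ Rooted (C t i) i := by
  intro t ht
  induction t with
  | zero => exact h0
  | succ t ih =>
    have hs := hstep t (by omega)
    have ih := ih (by omega)
    exact fun i hi => ⟨hs.exists_child (ih i hi).1.choose_spec,
      hs.rooted (fun l hl => (ih l hl).2) i hi⟩

end Runs

theorem greedy_convergence_general
    (N M K : ℕ) (hKM : K ≤ M) (hMN : M ≤ N)
    (dbar : ℕ → ℕ) (C : ℕ → Cfg) (T : ℕ)
    (hvalid : ValidEdges N M (C 0)) (htree : TreeInit N M K (C 0))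
    (hstep : ∀ t < T, GreedyStep N M K dbar (C t) (C (t + 1))) :
    (∀ t ≤ T, TreeInit N M K (C t)) ∧ T ≤ K * N - M ∧
    ((K * N - M ≤ ∑ u ∈ V N, dbar u) →
      (∀ i ∈ R M, 1 ≤ dbar i ∧ 1 ≤ outDeg (C 0 i) i) →
      (∀ i ∈ R M, ∀ u : ℕ, (∃ w, (w, u) ∈ C 0 i) → depth (C 0 i) i u ≠ ⊤) →
      ((∀ up u i : ℕ, ¬ AddApp N M K (C T) dbar up u i) ∧
        (∀ up u uc i : ℕ, ¬ InsertApp N M K (C T) up u uc i)) →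
      ∀ u ∈ V N, {i : ℕ | i ∈ R M ∧ depth (C T i) i u ≠ ⊤}.ncard = K) := by
  have hinv := run_treeInit_and_le_sum_incCount hMN hvalid htree hstep
  obtain ⟨-, htT, hsumT⟩ := hinv T le_rfl
  refine ⟨fun t ht => (hinv t ht).2.1, by have := htT.sum_incCount_le; omega, ?_⟩
  intro _ hroot hnocyc hterm u hu
  have hcol := run_child_and_rooted hstep fun i hi => ⟨outDeg_pos_iff.1 (hroot i hi).2,
    fun a b hab => depth_ne_top_iff_reach.1 (hnocyc i hi b ⟨a, hab⟩)⟩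
  rw [htT.ncard_depth_ne_top (fun i hi => (hcol T le_rfl i hi).2) hu,
    htT.incCount_eq_of_not_insertApp hKM hMN (fun i hi => (hcol T le_rfl i hi).1) hterm.2 hu]

/-- along any sequence of Adds/Inserts starting from a Tree Initially
configuration, Tree Initially is preserved and at most `K·N − M` steps occur;
moreover under Minimum Degree, Root Child and No Cycle, if no Add or Insert is
applicable in the final configuration then every node is covered by `K` trees. -/
theorem greedy_convergence
    (N M K : ℕ) (hK : 0 < K) (hKM : K ≤ M) (hMN : M ≤ N)
    (dbar : ℕ → ℕ) (C : ℕ → Cfg) (T : ℕ)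
    (hvalid : ValidEdges N M (C 0)) (htree : TreeInit N M K (C 0))
    (hstep : ∀ t < T, GreedyStep N M K dbar (C t) (C (t + 1))) :
    (∀ t ≤ T, TreeInit N M K (C t)) ∧ T ≤ K * N - M ∧
    ((K * N - M ≤ ∑ u ∈ V N, dbar u) →
      (∀ i ∈ R M, 1 ≤ dbar i ∧ 1 ≤ outDeg (C 0 i) i) →
      (∀ i ∈ R M, ∀ u : ℕ, (∃ w, (w, u) ∈ C 0 i) → depth (C 0 i) i u ≠ ⊤) →
      ((∀ up u i : ℕ, ¬ AddApp N M K (C T) dbar up u i) ∧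
        (∀ up u uc i : ℕ, ¬ InsertApp N M K (C T) up u uc i)) →
      ∀ u ∈ V N, {i : ℕ | i ∈ R M ∧ depth (C T i) i u ≠ ⊤}.ncard = K) :=
  greedy_convergence_general N M K hKM hMN dbar C T hvalid htree hstep

end P2P
end

section
/- Suppose a configuration satisfies Tree Initially, d(u) ≤ d̄_u for every node u, and Root Child (for every i ∈ ℛ, d̄_i ≥ 1 and d_i(i) ≥ 1), and suppose that no Jump and no LeafSwap is applicable at any triple. Then for every i ∈ ℛ: (1) E_i contains no directed cycle all of whose vertices lie outside V_i; (2) for any two i-leaves u, v ∈ V_i, |L_i(u) − L_i(v)| ≤ 1; (3) every node u ∈ V_i with L_i(u) + 2 ≤ max_{w∈V_i} L_i(w) satisfies d(u) = d̄_u and d_i(u) ≥ 1. -/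
/-!
Fix a colour `i`. If a node `p` with an `i`-parent and an `i`-child is strictly deeper than an
`i`-leaf `v` that has an `i`-parent, LeafSwap applies at `(p, v, i)`. Such leaves exist in `V_i`:
as every node has at most one `i`-parent and the root has none, the depth grows by exactly one
along each `i`-edge, so a deepest non-root node of `V_i` is a leaf, and the root has a child.
Taking `p` on a cycle outside `V_i` (depth `⊤`) gives (1); taking `p` the parent of a node `u` with
`L_i(u) > L_i(v) + 1` gives (2). For (3), if `L_i(u) + 1 < L_i(w)`, then `u` would be a Jump target
for `w` if it had spare capacity, and (2) would fail for `w` and `u` if `u` were an `i`-leaf.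
-/

namespace P2P

section Depth

variable {α : Type*} {E : Finset (α × α)} {r u w : α} {n : ℕ}

theorem Walk.eq_of_length_zero (h : Walk E r u 0) : u = r := by
  obtain ⟨f, hf0, hfn, -⟩ := h
  rw [← hfn, hf0]

theorem Walk.snoc (h : Walk E r w n) (he : (w, u) ∈ E) : Walk E r u (n + 1) := by
  classical
  obtain ⟨f, hf0, hfn, hf⟩ := h
  refine ⟨fun k => if k ≤ n then f k else u, by simpa using hf0, by simp, fun k hk => ?_⟩
  rcases Nat.lt_succ_iff_lt_or_eq.mp hk with hk | rfl
  · simpa [hk.le, Nat.succ_le_of_lt hk] using hf k hk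
  · simpa [hfn] using he

theorem Walk.exists_last_edge (h : Walk E r u (n + 1)) : ∃ w, Walk E r w n ∧ (w, u) ∈ E := by
  obtain ⟨f, hf0, hfn, hf⟩ := h
  exact ⟨f n, ⟨f, hf0, rfl, fun k hk => hf k (by omega)⟩, hfn ▸ hf n n.lt_succ_self⟩

theorem depth_le_of_walk (h : Walk E r u n) : depth E r u ≤ n :=
  sInf_le ⟨n, rfl, h⟩

theorem exists_walk_of_depth_ne_top (h : depth E r u ≠ ⊤) :
    ∃ m : ℕ, depth E r u = m ∧ Walk E r u m := by
  have hne : {n : ℕ∞ | ∃ m : ℕ, n = m ∧ Walk E r u m}.Nonempty := by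
    by_contra hemp
    exact h (by rw [depth, Set.not_nonempty_iff_eq_empty.mp hemp, sInf_empty])
  exact csInf_mem hne

theorem depth_self : depth E r r = 0 :=
  nonpos_iff_eq_zero.mp (depth_le_of_walk (n := 0) ⟨fun _ => r, rfl, rfl, by simp⟩)

theorem eq_of_depth_eq_zero (h : depth E r u = 0) : u = r := by
  obtain ⟨m, hm, hw⟩ := exists_walk_of_depth_ne_top (h ▸ ENat.zero_ne_top)
  obtain rfl : m = 0 := by exact_mod_cast hm.symm.trans h
  exact hw.eq_of_length_zero

theorem depth_le_depth_add_one (he : (w, u) ∈ E) : depth E r u ≤ depth E r w + 1 := by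
  rcases eq_or_ne (depth E r w) ⊤ with h | h
  · simp [h]
  · obtain ⟨m, hm, hw⟩ := exists_walk_of_depth_ne_top h
    rw [hm]
    exact_mod_cast depth_le_of_walk (hw.snoc he)

theorem exists_parent_of_depth (h0 : depth E r u ≠ 0) (ht : depth E r u ≠ ⊤) :
    ∃ w, (w, u) ∈ E ∧ depth E r w + 1 = depth E r u := by
  obtain ⟨m, hm, hw⟩ := exists_walk_of_depth_ne_top ht
  obtain ⟨k, rfl⟩ : ∃ k, m = k + 1 := Nat.exists_eq_succ_of_ne_zero (by rintro rfl; exact h0 (by simpa using hm))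
  obtain ⟨w, hw, he⟩ := hw.exists_last_edge
  refine ⟨w, he, le_antisymm ?_ (depth_le_depth_add_one he)⟩
  rw [hm, Nat.cast_succ]
  gcongr
  exact depth_le_of_walk hw

theorem outDeg_pos_iff_s2 [DecidableEq α] : 0 < outDeg E u ↔ ∃ c, (u, c) ∈ E := by
  simp [outDeg, Finset.card_pos, Finset.Nonempty]

structure UniqueParents (E : Finset (α × α)) (r : α) : Prop where
  eq_of_mem : ∀ {x w u}, (x, u) ∈ E → (w, u) ∈ E → x = w
  root_not_mem : ∀ w, (w, r) ∉ E

theorem UniqueParents.depth_eq_add_one (hT : UniqueParents E r) (he : (w, u) ∈ E) :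
    depth E r u = depth E r w + 1 := by
  refine le_antisymm (depth_le_depth_add_one he) ?_
  rcases eq_or_ne (depth E r u) ⊤ with ht | ht
  · simp [ht]
  have h0 : depth E r u ≠ 0 := fun h0 => hT.root_not_mem w (eq_of_depth_eq_zero h0 ▸ he)
  obtain ⟨x, hx, hxu⟩ := exists_parent_of_depth h0 ht
  rw [← hxu, hT.eq_of_mem hx he]

theorem depth_ne_top_of_mem (he : (w, u) ∈ E) (hw : depth E r w ≠ ⊤) : depth E r u ≠ ⊤ :=
  ne_top_of_le_ne_top (by simpa using hw) (depth_le_depth_add_one he)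

theorem UniqueParents.exists_leaf [DecidableEq α] (hT : UniqueParents E r) (hr : 0 < outDeg E r) :
    ∃ v, (∃ w, (w, v) ∈ E) ∧ outDeg E v = 0 ∧ depth E r v ≠ ⊤ := by
  obtain ⟨c, hc⟩ := outDeg_pos_iff_s2.mp hr
  set T := (E.image Prod.snd).filter fun v => depth E r v ≠ ⊤
  have hmemT {w v} (he : (w, v) ∈ E) (hv : depth E r v ≠ ⊤) : v ∈ T :=
    Finset.mem_filter.mpr ⟨Finset.mem_image_of_mem Prod.snd he, hv⟩
  have hcT : c ∈ T := hmemT hc (depth_ne_top_of_mem hc (depth_self ▸ ENat.zero_ne_top))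
  obtain ⟨v, hvT, hvmax⟩ := T.exists_max_image (depth E r) ⟨c, hcT⟩
  obtain ⟨hvE, hv⟩ := Finset.mem_filter.mp hvT
  obtain ⟨⟨w, v⟩, hwv, rfl⟩ := Finset.mem_image.mp hvE
  refine ⟨v, ⟨w, hwv⟩, ?_, hv⟩
  by_contra hleaf
  obtain ⟨c', hc'⟩ := outDeg_pos_iff_s2.mp (Nat.pos_of_ne_zero hleaf)
  have hle := hvmax c' (hmemT hc' (depth_ne_top_of_mem hc' hv))
  rw [hT.depth_eq_add_one hc'] at hle
  lift depth E r v to ℕ using hv with k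
  norm_cast at hle
  omega

end Depth

section Balance

variable {N M K : ℕ} {E : Cfg} {dbar : ℕ → ℕ} {i : ℕ}

theorem TreeInit.uniqueParents (htree : TreeInit N M K E) (hvalid : ValidEdges N M E)
    (hi : i ∈ R M) : UniqueParents (E i) i where
  eq_of_mem {x w u} hx hw := congrArg Prod.fst <|
    Finset.card_le_one.mp (htree.2.1 i hi u (hvalid i hi _ hw).2.1) (x, u)
      (Finset.mem_filter.mpr ⟨hx, rfl⟩) (w, u) (Finset.mem_filter.mpr ⟨hw, rfl⟩)
  root_not_mem w hw := by
    have hin := htree.2.2 i hi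
    rw [inDeg, Finset.card_eq_zero, Finset.filter_eq_empty_iff] at hin
    exact hin hw rfl

theorem hasIn_of_depth_ne_top {u : ℕ} (h : depth (E i) i u ≠ ⊤) : HasIn E i u := by
  by_cases h0 : depth (E i) i u = 0
  · exact Or.inr (eq_of_depth_eq_zero h0)
  · obtain ⟨w, hw, -⟩ := exists_parent_of_depth h0 h
    exact Or.inl ⟨w, hw⟩

theorem not_exists_cycle_of_depth_eq_top (hi : i ∈ R M) (hT : UniqueParents (E i) i)
    (hloop : ∀ e ∈ E i, e.1 ≠ e.2) (hroot : 0 < outDeg (E i) i)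
    (hswap : ∀ u v, ¬ LeafSwapApp M E u v i) :
    ¬ ∃ (n : ℕ) (f : ℕ → ℕ), 0 < n ∧ f 0 = f n ∧ (∀ k < n, (f k, f (k + 1)) ∈ E i) ∧
      (∀ k ≤ n, depth (E i) i (f k) = ⊤) := by
  rintro ⟨n, f, hn, hfc, hfe, hfd⟩
  obtain ⟨v, hvp, hleaf, hv⟩ := hT.exists_leaf hroot
  obtain rfl | hn2 : n = 1 ∨ 2 ≤ n := by omega
  · exact hloop _ (hfe 0 hn) hfc
  · exact hswap (f 1) v ⟨hi, ⟨f 0, hfe 0 hn⟩, hvp, hleaf, outDeg_pos_iff_s2.mpr ⟨f 2, hfe 1 hn2⟩,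
      by rw [hfd 1 (by omega)]; exact hv.lt_top⟩

theorem depth_le_depth_leaf_add_one (hi : i ∈ R M) (hroot : 0 < outDeg (E i) i)
    (hswap : ∀ u v, ¬ LeafSwapApp M E u v i) {u v : ℕ} (hu : depth (E i) i u ≠ ⊤)
    (hv : depth (E i) i v ≠ ⊤) (hleaf : outDeg (E i) v = 0) :
    depth (E i) i u ≤ depth (E i) i v + 1 := by
  by_contra! hlt
  have hv0 : depth (E i) i v ≠ 0 := fun h0 => by
    rw [eq_of_depth_eq_zero h0] at hleaf
    omega
  obtain ⟨vp, hvp, -⟩ := exists_parent_of_depth hv0 hv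
  obtain ⟨p, hpu, hp⟩ := exists_parent_of_depth (pos_of_gt hlt).ne' hu
  have hpt : depth (E i) i p ≠ ⊤ := fun h => hu (by rw [← hp, h, top_add])
  rw [← hp] at hlt
  have hvp_lt : depth (E i) i v < depth (E i) i p := by
    lift depth (E i) i v to ℕ using hv with a
    lift depth (E i) i p to ℕ using hpt with b
    norm_cast at hlt ⊢
    omega
  obtain ⟨pp, hpp, -⟩ := exists_parent_of_depth (pos_of_gt hvp_lt).ne' hpt
  exact hswap p v ⟨hi, ⟨pp, hpp⟩, ⟨vp, hvp⟩, hleaf, outDeg_pos_iff_s2.mpr ⟨u, hpu⟩, hvp_lt⟩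

theorem saturated_of_depth_add_one_lt (hi : i ∈ R M) (hroot : 0 < outDeg (E i) i)
    (hswap : ∀ u v, ¬ LeafSwapApp M E u v i) (hjump : ∀ u v, ¬ JumpApp M E dbar u v i)
    {u w : ℕ} (hcap : dtot M E u ≤ dbar u) (hu : depth (E i) i u ≠ ⊤)
    (hw : depth (E i) i w ≠ ⊤) (huw : depth (E i) i u + 1 < depth (E i) i w) :
    dtot M E u = dbar u ∧ 1 ≤ outDeg (E i) u := by
  obtain ⟨wp, hwp, -⟩ := exists_parent_of_depth (pos_of_gt huw).ne' hw
  have hin := hasIn_of_depth_ne_top hu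
  refine ⟨?_, ?_⟩
  · by_contra hne
    exact hjump w u ⟨hi, ⟨wp, hwp⟩, ⟨lt_of_le_of_ne hcap hne, i, hi, hin⟩, hin, huw⟩
  · by_contra! hleaf
    exact (depth_le_depth_leaf_add_one hi hroot hswap hw hu (by omega)).not_gt huw

end Balance

theorem single_tree_balance_general
    (N M K : ℕ)
    (E : Cfg) (dbar : ℕ → ℕ)
    (hvalid : ValidEdges N M E) (htree : TreeInit N M K E)
    (hcap : ∀ u ∈ V N, dtot M E u ≤ dbar u)
    (hroot : ∀ i ∈ R M, 1 ≤ dbar i ∧ 1 ≤ outDeg (E i) i)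
    (hnomove : ∀ u v i : ℕ, ¬ JumpApp M E dbar u v i ∧ ¬ LeafSwapApp M E u v i) :
    ∀ i ∈ R M,
      (¬ ∃ (n : ℕ) (f : ℕ → ℕ), 0 < n ∧ f 0 = f n ∧
          (∀ k < n, (f k, f (k + 1)) ∈ E i) ∧
          (∀ k ≤ n, depth (E i) i (f k) = ⊤)) ∧
      (∀ u ∈ V N, ∀ v ∈ V N,
        depth (E i) i u ≠ ⊤ → depth (E i) i v ≠ ⊤ →
        outDeg (E i) u = 0 → outDeg (E i) v = 0 →
        depth (E i) i u ≤ depth (E i) i v + 1 ∧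
          depth (E i) i v ≤ depth (E i) i u + 1) ∧
      (∀ u ∈ V N, depth (E i) i u ≠ ⊤ →
        depth (E i) i u + 2 ≤
          sSup {d : ℕ∞ | ∃ w ∈ V N, depth (E i) i w = d ∧ d ≠ ⊤} →
        dtot M E u = dbar u ∧ 1 ≤ outDeg (E i) u) := by
  intro i hi
  have hrooti : 0 < outDeg (E i) i := (hroot i hi).2
  have hswap u v : ¬ LeafSwapApp M E u v i := (hnomove u v i).2
  refine ⟨not_exists_cycle_of_depth_eq_top hi (htree.uniqueParents hvalid hi)
      (fun e he => (hvalid i hi e he).2.2) hrooti hswap,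
    fun u _ v _ hu hv hlu hlv => ⟨depth_le_depth_leaf_add_one hi hrooti hswap hu hv hlv,
      depth_le_depth_leaf_add_one hi hrooti hswap hv hu hlu⟩,
    fun u huV hu hmax => ?_⟩
  have hlt : depth (E i) i u + 1 < depth (E i) i u + 2 := by
    lift depth (E i) i u to ℕ using hu with a
    norm_cast
    omega
  obtain ⟨_, ⟨w, -, rfl, hw⟩, huw⟩ := lt_sSup_iff.mp (hlt.trans_le hmax)
  exact saturated_of_depth_add_one_lt hi hrooti hswap (fun u v => (hnomove u v i).1)
    (hcap u huV) hu hw huw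

/-- if no Jump and no LeafSwap is applicable anywhere, then for each
color `i`: (1) there is no directed cycle whose vertices all lie outside `V_i`;
(2) depths of any two `i`-leaves of `V_i` differ by at most one; (3) every
internal node of `V_i` is at full capacity and has an outgoing `i`-edge. -/
theorem single_tree_balance
    (N M K : ℕ) (hK : 0 < K) (hKM : K ≤ M) (hMN : M ≤ N)
    (E : Cfg) (dbar : ℕ → ℕ)
    (hvalid : ValidEdges N M E) (htree : TreeInit N M K E)
    (hcap : ∀ u ∈ V N, dtot M E u ≤ dbar u)
    (hroot : ∀ i ∈ R M, 1 ≤ dbar i ∧ 1 ≤ outDeg (E i) i)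
    (hnomove : ∀ u v i : ℕ, ¬ JumpApp M E dbar u v i ∧ ¬ LeafSwapApp M E u v i) :
    ∀ i ∈ R M,
      (¬ ∃ (n : ℕ) (f : ℕ → ℕ), 0 < n ∧ f 0 = f n ∧
          (∀ k < n, (f k, f (k + 1)) ∈ E i) ∧
          (∀ k ≤ n, depth (E i) i (f k) = ⊤)) ∧
      (∀ u ∈ V N, ∀ v ∈ V N,
        depth (E i) i u ≠ ⊤ → depth (E i) i v ≠ ⊤ →
        outDeg (E i) u = 0 → outDeg (E i) v = 0 →
        depth (E i) i u ≤ depth (E i) i v + 1 ∧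
          depth (E i) i v ≤ depth (E i) i u + 1) ∧
      (∀ u ∈ V N, depth (E i) i u ≠ ⊤ →
        depth (E i) i u + 2 ≤
          sSup {d : ℕ∞ | ∃ w ∈ V N, depth (E i) i w = d ∧ d ≠ ⊤} →
        dtot M E u = dbar u ∧ 1 ≤ outDeg (E i) u) :=
  single_tree_balance_general N M K E dbar hvalid htree hcap hroot hnomove

end P2P
end
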